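/- arXiv:math/9901052 — 2 statements merged into one kernel-verified Lean document; each statement's English description precedes it below -/
import Mathlib

section
/- If e₁, …, eₙ is an orthonormal basis of E, then the supertrace of the composite operator c(e₁)∘ĉ(e₁)∘c(e₂)∘ĉ(e₂)∘⋯∘c(eₙ)∘ĉ(eₙ) on Λ(E) equals (−2)ⁿ. -/
set_option linter.unusedSectionVars false
set_option linter.unnecessarySimpa false
set_option maxHeartbeats 1000000


/-!
Let `E` be a real inner product space of dimension `n` with orthonormal basis `e₁, …, eₙ`.
The supertrace (trace against the grading operator `Γ`, which acts by `(-1)^p` on the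
degree-`p` component `Λ^p(E) = (range ι)^p`) of `c(e₁)ĉ(e₁)⋯c(eₙ)ĉ(eₙ)` equals `(-2)^n`.
-/

variable {E : Type*} [NormedAddCommGroup E] [InnerProductSpace ℝ E] [FiniteDimensional ℝ E]

/-- Left exterior multiplication by `e` on `Λ(E)`. -/
noncomputable def extOp (e : E) : Module.End ℝ (ExteriorAlgebra ℝ E) :=
  LinearMap.mulLeft ℝ (ExteriorAlgebra.ι ℝ e)

/-- Interior product (contraction) with `e`, i.e. contraction against the covector `⟪e, ·⟫`. -/
noncomputable def intOp (e : E) : Module.End ℝ (ExteriorAlgebra ℝ E) :=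
  CliffordAlgebra.contractLeft (Q := (0 : QuadraticForm ℝ E)) ((innerSL ℝ e).toLinearMap)

/-- The Clifford action `c(e) = ext(e) - ι(e)`. -/
noncomputable def cOp (e : E) : Module.End ℝ (ExteriorAlgebra ℝ E) := extOp e - intOp e

/-- The Clifford action `ĉ(e) = ext(e) + ι(e)`. -/
noncomputable def hcOp (e : E) : Module.End ℝ (ExteriorAlgebra ℝ E) := extOp e + intOp e


lemma extOp_apply (e : E) (x : ExteriorAlgebra ℝ E) : extOp e x = ExteriorAlgebra.ι ℝ e * x := rfl

lemma intOp_ι_mul (e a : E) (x : ExteriorAlgebra ℝ E) :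
    intOp e (ExteriorAlgebra.ι ℝ a * x)
      = (inner ℝ e a : ℝ) • x - ExteriorAlgebra.ι ℝ a * intOp e x := by
  simpa [intOp] using
    CliffordAlgebra.contractLeft_ι_mul (Q := (0 : QuadraticForm ℝ E))
      (d := (innerSL ℝ e).toLinearMap) a x

lemma intOp_one (e : E) : intOp e (1 : ExteriorAlgebra ℝ E) = 0 := by
  simpa [intOp] using
    CliffordAlgebra.contractLeft_one (Q := (0 : QuadraticForm ℝ E))
      (d := (innerSL ℝ e).toLinearMap)

lemma intOp_intOp (e : E) (x : ExteriorAlgebra ℝ E) : intOp e (intOp e x) = 0 := by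
  simpa [intOp] using
    CliffordAlgebra.contractLeft_contractLeft (Q := (0 : QuadraticForm ℝ E))
      (d := (innerSL ℝ e).toLinearMap) x

lemma cOp_mul_hcOp (e : E) :
    cOp e * hcOp e = extOp e * intOp e - intOp e * extOp e := by
  apply LinearMap.ext; intro x
  simp only [cOp, hcOp, Module.End.mul_apply, LinearMap.sub_apply, LinearMap.add_apply,
    extOp_apply, map_add, map_sub]
  have h1 : ExteriorAlgebra.ι ℝ e * (ExteriorAlgebra.ι ℝ e * x) = 0 := by
    rw [← mul_assoc, ExteriorAlgebra.ι_sq_zero, zero_mul]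
  rw [intOp_intOp, h1]
  abel

lemma ι_swap (u w : E) (y : ExteriorAlgebra ℝ E) :
    ExteriorAlgebra.ι ℝ u * (ExteriorAlgebra.ι ℝ w * y)
      = -(ExteriorAlgebra.ι ℝ w * (ExteriorAlgebra.ι ℝ u * y)) := by
  rw [← mul_assoc, ← mul_assoc, eq_neg_of_add_eq_zero_left (ExteriorAlgebra.ι_add_mul_swap u w),
    neg_mul]

section Basis
variable {n : ℕ} (b : OrthonormalBasis (Fin n) ℝ E)

noncomputable def eL (l : List (Fin n)) : ExteriorAlgebra ℝ E :=
  (l.map fun i => ExteriorAlgebra.ι ℝ (b i)).prod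

lemma eL_nil : eL b ([] : List (Fin n)) = 1 := rfl

lemma eL_cons (i : Fin n) (l : List (Fin n)) :
    eL b (i :: l) = ExteriorAlgebra.ι ℝ (b i) * eL b l := by
  simp [eL]

lemma eL_append (l l' : List (Fin n)) : eL b (l ++ l') = eL b l * eL b l' := by
  simp [eL]

lemma inner_bb (i j : Fin n) : (inner ℝ (b i) (b j) : ℝ) = if i = j then 1 else 0 :=
  orthonormal_iff_ite.mp b.orthonormal i j

lemma intOp_eL_of_not_mem {i : Fin n} : ∀ {l : List (Fin n)}, i ∉ l → intOp (b i) (eL b l) = 0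
  | [], _ => by rw [eL_nil, intOp_one]
  | j :: t, h => by
    have hij : i ≠ j := fun hh => h (hh ▸ List.mem_cons_self (a := j) (l := t))
    rw [eL_cons, intOp_ι_mul, inner_bb, if_neg hij, zero_smul, zero_sub,
      intOp_eL_of_not_mem (fun ht => h (List.mem_cons_of_mem _ ht)), mul_zero, neg_zero]

lemma intOp_ι_same (i : Fin n) (x : ExteriorAlgebra ℝ E) :
    intOp (b i) (ExteriorAlgebra.ι ℝ (b i) * x) = x - ExteriorAlgebra.ι ℝ (b i) * intOp (b i) x := by
  rw [intOp_ι_mul, inner_bb, if_pos rfl, one_smul]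

lemma mul_eL_of_mem {j : Fin n} : ∀ {t : List (Fin n)}, j ∈ t →
    ExteriorAlgebra.ι ℝ (b j) * eL b t = 0
  | k :: t', h => by
    rw [eL_cons]
    rcases eq_or_ne j k with rfl | hjk
    · rw [← mul_assoc, ExteriorAlgebra.ι_sq_zero, zero_mul]
    · have : j ∈ t' := (List.mem_cons.mp h).resolve_left hjk
      rw [ι_swap, mul_eL_of_mem this, mul_zero, neg_zero]

lemma eL_eq_zero_of_not_nodup : ∀ {l : List (Fin n)}, ¬ l.Nodup → eL b l = 0
  | [], h => absurd List.nodup_nil h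
  | j :: t, h => by
    rw [eL_cons]
    by_cases hj : j ∈ t
    · exact mul_eL_of_mem b hj
    · have : ¬ t.Nodup := fun ht => h (List.nodup_cons.mpr ⟨hj, ht⟩)
      rw [eL_eq_zero_of_not_nodup this, mul_zero]

end Basis

section Basis2
variable {E : Type*} [NormedAddCommGroup E] [InnerProductSpace ℝ E] [FiniteDimensional ℝ E]
variable {n : ℕ} (b : OrthonormalBasis (Fin n) ℝ E)

lemma A_eL (i : Fin n) : ∀ (l : List (Fin n)),
    (extOp (b i) * intOp (b i) - intOp (b i) * extOp (b i)) (eL b l)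
      = (if i ∈ l then (1 : ℝ) else -1) • eL b l
  | [] => by
    simp only [LinearMap.sub_apply, Module.End.mul_apply, eL_nil, extOp_apply, intOp_one,
      mul_zero, map_zero, List.not_mem_nil, if_neg, not_false_iff]
    rw [mul_one, show intOp (b i) (ExteriorAlgebra.ι ℝ (b i)) =
        intOp (b i) (ExteriorAlgebra.ι ℝ (b i) * 1) by rw [mul_one]]
    rw [intOp_ι_same, intOp_one, mul_zero, sub_zero, zero_sub, neg_smul, one_smul]
  | j :: l => by
    have IH := A_eL i l
    simp only [LinearMap.sub_apply, Module.End.mul_apply, extOp_apply] at IH ⊢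
    rw [eL_cons]
    set u := ExteriorAlgebra.ι ℝ (b i) with hu
    set w := ExteriorAlgebra.ι ℝ (b j) with hw
    set x := eL b l with hx
    rcases eq_or_ne i j with rfl | hij
    · rw [if_pos (List.mem_cons_self)]
      have h1 : intOp (b i) (u * x) = x - u * intOp (b i) x := intOp_ι_same b i x
      have h2 : intOp (b i) (u * (u * x)) = (u * x) - u * intOp (b i) (u * x) :=
        intOp_ι_same b i (u * x)
      rw [h2, h1, mul_sub]
      rw [show u * (u * intOp (b i) x) = 0 by rw [← mul_assoc, ExteriorAlgebra.ι_sq_zero, zero_mul]]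
      rw [one_smul, hw, ← hu]
      abel
    · rw [show (if i ∈ j :: l then (1:ℝ) else -1) = (if i ∈ l then (1:ℝ) else -1) by
        simp [List.mem_cons, hij]]
      have hwx : intOp (b i) (w * x) = -(w * intOp (b i) x) := by
        rw [hw, intOp_ι_mul, inner_bb, if_neg hij, zero_smul, zero_sub]
      have huwx : intOp (b i) (u * (w * x)) = (w * x) - u * intOp (b i) (w * x) :=
        intOp_ι_same b i (w * x)
      have hux : intOp (b i) (u * x) = x - u * intOp (b i) x := intOp_ι_same b i x
      rw [huwx, hwx, mul_neg, hu, hw, ι_swap (b i) (b j) (intOp (b i) x), neg_neg,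
        ← mul_smul_comm, ← IH, hux, mul_sub, mul_sub]
end Basis2

section Basis3
variable {E : Type*} [NormedAddCommGroup E] [InnerProductSpace ℝ E] [FiniteDimensional ℝ E]
variable {n : ℕ} (b : OrthonormalBasis (Fin n) ℝ E)

lemma prodA_eL (l : List (Fin n)) : ∀ (L : List (Fin n)),
    ((L.map fun i => cOp (b i) * hcOp (b i)).prod) (eL b l)
      = ((L.map fun i => if i ∈ l then (1 : ℝ) else -1).prod) • eL b l
  | [] => by simp
  | j :: L => by
    rw [List.map_cons, List.prod_cons, Module.End.mul_apply, prodA_eL l L, map_smul,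
      cOp_mul_hcOp, A_eL, List.map_cons, List.prod_cons, smul_smul, mul_comm]

lemma eL_mem_pow : ∀ (l : List (Fin n)),
    eL b l ∈ (LinearMap.range (ExteriorAlgebra.ι ℝ (M := E))) ^ l.length
  | [] => by
    rw [eL_nil]
    simp only [List.length_nil, pow_zero]
    exact Submodule.one_le.mp le_rfl
  | j :: l => by
    rw [eL_cons, List.length_cons, pow_succ']
    exact Submodule.mul_mem_mul (LinearMap.mem_range_self _ _) (eL_mem_pow l)

lemma spanAll : Submodule.span ℝ {x : ExteriorAlgebra ℝ E | ∃ l : List (Fin n), x = eL b l} = ⊤ := by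
  rw [eq_top_iff]
  rintro x -
  induction x using ExteriorAlgebra.induction with
  | algebraMap r =>
    rw [Algebra.algebraMap_eq_smul_one]
    exact Submodule.smul_mem _ _ (Submodule.subset_span ⟨[], rfl⟩)
  | ι m =>
    rw [← b.sum_repr m]
    rw [map_sum]
    refine Submodule.sum_mem _ fun i _ => ?_
    rw [map_smul]
    refine Submodule.smul_mem _ _ (Submodule.subset_span ⟨[i], ?_⟩)
    simp [eL]
  | mul a c ha hc =>
    have h := Submodule.mul_mem_mul ha hc
    rw [Submodule.span_mul_span] at h
    refine Submodule.span_le.mpr ?_ h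
    rintro y ⟨y1, ⟨l1, rfl⟩, y2, ⟨l2, rfl⟩, rfl⟩
    exact Submodule.subset_span ⟨l1 ++ l2, (eL_append b l1 l2).symm⟩
  | add a c ha hc => exact Submodule.add_mem _ ha hc

end Basis3

section Basis4
variable {E : Type*} [NormedAddCommGroup E] [InnerProductSpace ℝ E] [FiniteDimensional ℝ E]
variable {n : ℕ} (b : OrthonormalBasis (Fin n) ℝ E)

lemma scalar_calc (l : List (Fin n)) (hl : l.Nodup) :
    ((List.ofFn fun i : Fin n => if i ∈ l then (1 : ℝ) else -1).prod) * (-1 : ℝ) ^ l.length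
      = (-1 : ℝ) ^ n := by
  rw [List.prod_ofFn]
  have h1 : (∏ i : Fin n, (if i ∈ l then (1 : ℝ) else -1)) = (-1 : ℝ) ^ (l.toFinsetᶜ.card) := by
    rw [← Finset.prod_mul_prod_compl l.toFinset]
    rw [Finset.prod_eq_one fun i hi => if_pos (List.mem_toFinset.mp hi), one_mul]
    rw [Finset.prod_congr rfl fun i hi => if_neg (fun h => (Finset.mem_compl.mp hi)
      (List.mem_toFinset.mpr h)), Finset.prod_const]
  have hlen : l.toFinset.card = l.length := List.toFinset_card_of_nodup hl
  have hle : l.length ≤ n := by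
    simpa using hl.length_le_card
  rw [h1, Finset.card_compl, Fintype.card_fin, hlen, ← pow_add, Nat.sub_add_cancel hle]

lemma hop (Γ : Module.End ℝ (ExteriorAlgebra ℝ E))
    (hΓ : ∀ p : ℕ, ∀ ω ∈ (LinearMap.range (ExteriorAlgebra.ι ℝ (M := E))) ^ p,
      Γ ω = ((-1 : ℝ) ^ p) • ω) :
    Γ ∘ₗ (List.ofFn fun i : Fin n => cOp (b i) * hcOp (b i)).prod
      = ((-1 : ℝ) ^ n) • (LinearMap.id : Module.End ℝ (ExteriorAlgebra ℝ E)) := by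
  apply LinearMap.ext_on (spanAll b)
  rintro x ⟨l, rfl⟩
  rw [LinearMap.comp_apply, LinearMap.smul_apply, LinearMap.id_apply]
  by_cases hl : l.Nodup
  · rw [List.ofFn_eq_map, prodA_eL, map_smul, hΓ l.length _ (eL_mem_pow b l), smul_smul,
      ← List.ofFn_eq_map, scalar_calc l hl]
  · rw [eL_eq_zero_of_not_nodup b hl, map_zero, map_zero, smul_zero]

end Basis4

section Basis5
variable {E : Type*} [NormedAddCommGroup E] [InnerProductSpace ℝ E] [FiniteDimensional ℝ E]
variable {n : ℕ}

noncomputable def Dl (b : OrthonormalBasis (Fin n) ℝ E) :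
    List (Fin n) → Module.End ℝ (ExteriorAlgebra ℝ E)
  | [] => 1
  | i :: t => Dl b t * intOp (b i)

variable (b : OrthonormalBasis (Fin n) ℝ E)

lemma algebraMapInv_eL : ∀ l : List (Fin n),
    ExteriorAlgebra.algebraMapInv (eL b l) = if l = [] then (1 : ℝ) else 0
  | [] => by simp [eL_nil]
  | j :: t => by
    rw [eL_cons, map_mul]
    have h : ExteriorAlgebra.algebraMapInv (ExteriorAlgebra.ι ℝ (b j)) = (0 : ℝ) := by
      simp [ExteriorAlgebra.algebraMapInv]
    rw [h, zero_mul, if_neg (List.cons_ne_nil _ _)]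

lemma intOp_eL_erase (i : Fin n) : ∀ (l : List (Fin n)), l.Nodup → i ∈ l →
    intOp (b i) (eL b l) = eL b (l.erase i) ∨ intOp (b i) (eL b l) = -eL b (l.erase i)
  | j :: t, hnd, hmem => by
    rcases eq_or_ne j i with rfl | hji
    · left
      rw [List.erase_cons_head, eL_cons, intOp_ι_same,
        intOp_eL_of_not_mem b (List.nodup_cons.mp hnd).1, mul_zero, sub_zero]
    · have hit : i ∈ t := (List.mem_cons.mp hmem).resolve_left fun h => hji h.symm
      have herase : (j :: t).erase i = j :: t.erase i :=
        List.erase_cons_tail (by simpa using hji)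
      rw [herase, eL_cons, eL_cons, intOp_ι_mul, inner_bb,
        if_neg fun h => hji h.symm, zero_smul, zero_sub]
      rcases intOp_eL_erase i t (List.nodup_cons.mp hnd).2 hit with h | h
      · right; rw [h]
      · left; rw [h, mul_neg, neg_neg]

lemma Dl_eL : ∀ (l l' : List (Fin n)), l.Pairwise (· < ·) → l'.Pairwise (· < ·) →
    ExteriorAlgebra.algebraMapInv (Dl b l (eL b l')) = if l = l' then (1 : ℝ) else 0
  | [], l', _, _ => by
    rw [show Dl b [] = 1 from rfl, Module.End.one_apply, algebraMapInv_eL]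
    cases l' <;> simp
  | i :: t, [], hl, hl' => by
    rw [show Dl b (i :: t) = Dl b t * intOp (b i) from rfl, Module.End.mul_apply,
      intOp_eL_of_not_mem b (List.not_mem_nil (a := i)), map_zero, map_zero,
      if_neg (List.cons_ne_nil _ _)]
  | i :: t, j :: t', hl, hl' => by
    rw [show Dl b (i :: t) = Dl b t * intOp (b i) from rfl, Module.End.mul_apply]
    rcases eq_or_ne i j with rfl | hij
    · have hnotin : i ∉ t' := fun h => lt_irrefl i ((List.pairwise_cons.mp hl').1 i h)
      rw [eL_cons, intOp_ι_same, intOp_eL_of_not_mem b hnotin, mul_zero, sub_zero,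
        Dl_eL t t' hl.of_cons hl'.of_cons]
      by_cases h : t = t'
      · rw [if_pos h, if_pos (by rw [h])]
      · rw [if_neg h, if_neg fun hh => h (List.cons_injective hh)]
    · by_cases hmem : i ∈ j :: t'
      · have hit' : i ∈ t' := (List.mem_cons.mp hmem).resolve_left hij
        have herase : (j :: t').erase i = j :: t'.erase i :=
          List.erase_cons_tail (by simpa using fun h => hij h.symm)
        have hsorted_erase : ((j :: t').erase i).Pairwise (· < ·) :=
          List.Pairwise.sublist List.erase_sublist hl'
        have hne : t ≠ (j :: t').erase i := by
          intro hEq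
          have hj_in_t : j ∈ t := by rw [hEq, herase]; exact List.mem_cons_self
          have h1 : i < j := (List.pairwise_cons.mp hl).1 j hj_in_t
          have h2 : j < i := (List.pairwise_cons.mp hl').1 i hit'
          exact absurd h1 (not_lt.mpr h2.le)
        have hIH := Dl_eL t ((j :: t').erase i) hl.of_cons hsorted_erase
        rcases intOp_eL_erase b i (j :: t') (List.Pairwise.nodup hl') hmem with h | h
        · rw [h, hIH, if_neg hne, if_neg fun hh => hij (List.head_eq_of_cons_eq hh)]
        · rw [h, map_neg, map_neg, hIH, if_neg hne, neg_zero,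
            if_neg fun hh => hij (List.head_eq_of_cons_eq hh)]
      · rw [intOp_eL_of_not_mem b hmem, map_zero, map_zero,
          if_neg fun hh => hij (List.head_eq_of_cons_eq hh)]

end Basis5


section Basis6
variable {E : Type*} [NormedAddCommGroup E] [InnerProductSpace ℝ E] [FiniteDimensional ℝ E]
variable {n : ℕ} (b : OrthonormalBasis (Fin n) ℝ E)

noncomputable def vB (s : Finset (Fin n)) : ExteriorAlgebra ℝ E := eL b (s.sort (· ≤ ·))

lemma mul_eL_orderedInsert (j : Fin n) : ∀ (m : List (Fin n)),
    ExteriorAlgebra.ι ℝ (b j) * eL b m = eL b (m.orderedInsert (· ≤ ·) j)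
    ∨ ExteriorAlgebra.ι ℝ (b j) * eL b m = -eL b (m.orderedInsert (· ≤ ·) j)
  | [] => by left; simp [eL]
  | k :: t => by
    by_cases h : j ≤ k
    · left
      rw [List.orderedInsert, if_pos h]
      simp only [eL_cons]
    · rw [show (k :: t).orderedInsert (· ≤ ·) j = k :: t.orderedInsert (· ≤ ·) j by
        simp [List.orderedInsert, h]]
      rw [eL_cons, ι_swap, eL_cons]
      rcases mul_eL_orderedInsert j t with hh | hh
      · right; rw [hh]
      · left; rw [hh, mul_neg, neg_neg]

lemma orderedInsert_sort (j : Fin n) (s : Finset (Fin n)) (hj : j ∉ s) :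
    (s.sort (· ≤ ·)).orderedInsert (· ≤ ·) j = (insert j s).sort (· ≤ ·) := by
  haveI : IsAntisymm (Fin n) (· ≤ ·) := ⟨fun _ _ => le_antisymm⟩
  refine (fun hp h1 h2 => List.Perm.eq_of_pairwise' (r := (· ≤ ·)) h1 h2 hp) ?_ ?_ ?_
  · refine (List.perm_orderedInsert _ _ _).trans ?_
    rw [← Multiset.coe_eq_coe, ← Multiset.cons_coe, Finset.sort_eq, Finset.sort_eq,
      Finset.insert_val_of_notMem hj]
  · exact List.Pairwise.orderedInsert _ _ (Finset.pairwise_sort _ _)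
  · exact Finset.pairwise_sort _ _

lemma eL_mem_span_vB : ∀ l : List (Fin n),
    eL b l ∈ Submodule.span ℝ (Set.range (vB b))
  | [] => Submodule.subset_span ⟨∅, by simp [vB, Finset.sort_empty, eL_nil]⟩
  | j :: t => by
    rw [eL_cons]
    have ht := eL_mem_span_vB t
    have hmap : extOp (b j) (eL b t) ∈
        Submodule.map (extOp (b j)) (Submodule.span ℝ (Set.range (vB b))) :=
      ⟨eL b t, ht, rfl⟩
    rw [Submodule.map_span] at hmap
    refine Submodule.span_le.mpr ?_ hmap
    rintro _ ⟨_, ⟨s, rfl⟩, rfl⟩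
    rw [extOp_apply, vB]
    by_cases hjs : j ∈ s
    · rw [mul_eL_of_mem b ((Finset.mem_sort _).mpr hjs)]
      exact Submodule.zero_mem _
    · rcases mul_eL_orderedInsert b j (s.sort (· ≤ ·)) with h | h <;>
        rw [h, orderedInsert_sort j s hjs]
      · exact Submodule.subset_span ⟨insert j s, rfl⟩
      · exact Submodule.neg_mem _ (Submodule.subset_span ⟨insert j s, rfl⟩)

lemma vB_indep : LinearIndependent ℝ (vB b) := by
  rw [Fintype.linearIndependent_iff]
  intro g hg s
  have hterm : ∀ t : Finset (Fin n),
      ExteriorAlgebra.algebraMapInv (Dl b (s.sort (· ≤ ·)) (vB b t)) = if t = s then (1:ℝ) else 0 := by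
    intro t
    rw [vB, Dl_eL b _ _ (Finset.sortedLT_sort s).pairwise (Finset.sortedLT_sort t).pairwise]
    by_cases h : t = s
    · rw [if_pos h, if_pos (by rw [h])]
    · rw [if_neg h, if_neg fun hh => h (by
        have := congrArg List.toFinset hh
        rwa [Finset.sort_toFinset, Finset.sort_toFinset, eq_comm] at this)]
  have h2 := congrArg (fun y => ExteriorAlgebra.algebraMapInv (Dl b (s.sort (· ≤ ·)) y)) hg
  simp only [map_sum, map_smul, map_zero, hterm, smul_eq_mul, mul_ite, mul_one, mul_zero] at h2
  rwa [Finset.sum_ite_eq' Finset.univ s g, if_pos (Finset.mem_univ s)] at h2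

noncomputable def exBasis : Module.Basis (Finset (Fin n)) ℝ (ExteriorAlgebra ℝ E) :=
  Module.Basis.mk (vB_indep b) (by
    rw [← spanAll b]
    refine Submodule.span_le.mpr ?_
    rintro x ⟨l, rfl⟩
    exact eL_mem_span_vB b l)

end Basis6

theorem supertrace_full_monomial {n : ℕ} (b : OrthonormalBasis (Fin n) ℝ E)
    (Γ : Module.End ℝ (ExteriorAlgebra ℝ E))
    (hΓ : ∀ p : ℕ, ∀ ω ∈ (LinearMap.range (ExteriorAlgebra.ι ℝ (M := E))) ^ p,
      Γ ω = ((-1 : ℝ) ^ p) • ω) :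
    LinearMap.trace ℝ (ExteriorAlgebra ℝ E)
      (Γ ∘ₗ (List.ofFn fun i : Fin n => cOp (b i) * hcOp (b i)).prod) = (-2 : ℝ) ^ n := by
  haveI : Module.Finite ℝ (ExteriorAlgebra ℝ E) := Module.Finite.of_basis (exBasis b)
  rw [hop b Γ hΓ, map_smul, LinearMap.trace_id,
    Module.finrank_eq_card_basis (exBasis b), Fintype.card_finset, Fintype.card_fin,
    smul_eq_mul, show ((-2 : ℝ)) ^ n = (-1 : ℝ) ^ n * 2 ^ n by rw [← neg_one_mul, mul_pow]]
  push_cast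
  ring
end

section
/- Let e₁, …, eₙ be an orthonormal basis of E and let S, T ⊆ {1,…,n} be subsets which are not both equal to the full set {1,…,n}. Then the supertrace of the operator (∏_{i∈S} c(e_i)) ∘ (∏_{j∈T} ĉ(e_j)) (products taken in increasing order of indices) equals 0. (Together with the value (−2)ⁿ for the full interleaved monomial, this expresses that among the monomials in the c(e_i), ĉ(e_j), only c(e₁)ĉ(e₁)⋯c(eₙ)ĉ(eₙ) has nonzero supertrace.) -/
set_option linter.unusedSectionVars false
set_option maxHeartbeats 1000000

/-!
Let `E` be a real inner product space of dimension `n ≥ 1` with orthonormal basis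
`e₁, …, eₙ`, and `S, T ⊆ {1,…,n}` not both the full set. The supertrace (trace against
the grading operator `Γ`, which acts by `(-1)^p` on the degree-`p` component
`Λ^p(E) = (range ι)^p`) of `(∏_{i∈S} c(e_i)) ∘ (∏_{j∈T} ĉ(e_j))` (products taken in
increasing order of the indices) is `0`.
-/

variable {E : Type*} [NormedAddCommGroup E] [InnerProductSpace ℝ E] [FiniteDimensional ℝ E]

/-! ### Auxiliary algebraic lemmas -/

lemma ext_sq (e : E) : extOp e * extOp e = 0 := by
  refine LinearMap.ext fun x => ?_
  simp only [Module.End.mul_apply, extOp, LinearMap.mulLeft_apply, LinearMap.zero_apply,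
    ← mul_assoc, ExteriorAlgebra.ι_sq_zero, zero_mul]

lemma int_sq (e : E) : intOp e * intOp e = 0 := by
  refine LinearMap.ext fun x => ?_
  simp only [Module.End.mul_apply, intOp, LinearMap.zero_apply,
    CliffordAlgebra.contractLeft_contractLeft]

lemma extS (e f : E) : extOp e * extOp f + extOp f * extOp e = 0 := by
  refine LinearMap.ext fun x => ?_
  simp only [LinearMap.add_apply, Module.End.mul_apply, extOp, LinearMap.mulLeft_apply,
    LinearMap.zero_apply, ← mul_assoc, ← add_mul, ExteriorAlgebra.ι_add_mul_swap, zero_mul]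

lemma intS (e f : E) : intOp e * intOp f + intOp f * intOp e = 0 := by
  refine LinearMap.ext fun x => ?_
  simp only [LinearMap.add_apply, Module.End.mul_apply, intOp, LinearMap.zero_apply]
  rw [CliffordAlgebra.contractLeft_comm]
  simp

lemma extintS (e f : E) :
    extOp e * intOp f + intOp f * extOp e
      = (inner ℝ f e : ℝ) • (1 : Module.End ℝ (ExteriorAlgebra ℝ E)) := by
  refine LinearMap.ext fun x => ?_
  simp only [LinearMap.add_apply, Module.End.mul_apply, extOp, intOp, LinearMap.mulLeft_apply,
    LinearMap.smul_apply, Module.End.one_apply]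
  rw [CliffordAlgebra.contractLeft_ι_mul]
  simp only [ContinuousLinearMap.coe_coe, innerSL_apply_apply]
  abel

lemma c_sq (e : E) (h : (inner ℝ e e : ℝ) = 1) : cOp e * cOp e = -1 := by
  have expand : cOp e * cOp e = extOp e * extOp e + intOp e * intOp e
      - (extOp e * intOp e + intOp e * extOp e) := by
    simp only [cOp]; simp only [add_mul, mul_add, sub_mul, mul_sub]; abel
  rw [ext_sq, int_sq, extintS, h] at expand
  simpa using expand

lemma hc_sq (e : E) (h : (inner ℝ e e : ℝ) = 1) : hcOp e * hcOp e = 1 := by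
  have expand : hcOp e * hcOp e = extOp e * extOp e + intOp e * intOp e
      + (extOp e * intOp e + intOp e * extOp e) := by
    simp only [hcOp]; simp only [add_mul, mul_add, sub_mul, mul_sub]; abel
  rw [ext_sq, int_sq, extintS, h] at expand
  simpa using expand

lemma c_mul_c (e f : E) (h : (inner ℝ e f : ℝ) = 0) : cOp e * cOp f = -(cOp f * cOp e) := by
  have expand : cOp e * cOp f + cOp f * cOp e =
      (extOp e * extOp f + extOp f * extOp e) + (intOp e * intOp f + intOp f * intOp e)
        - ((extOp e * intOp f + intOp f * extOp e) + (extOp f * intOp e + intOp e * extOp f)) := by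
    simp only [cOp]; simp only [add_mul, mul_add, sub_mul, mul_sub]; abel
  have h' : (inner ℝ f e : ℝ) = 0 := by rw [real_inner_comm]; exact h
  rw [extS, intS, extintS, extintS, h, h'] at expand
  simp only [zero_smul, add_zero, zero_add, sub_zero, zero_sub, neg_zero] at expand
  exact eq_neg_of_add_eq_zero_left expand

lemma hc_mul_hc (e f : E) (h : (inner ℝ e f : ℝ) = 0) : hcOp e * hcOp f = -(hcOp f * hcOp e) := by
  have expand : hcOp e * hcOp f + hcOp f * hcOp e =
      (extOp e * extOp f + extOp f * extOp e) + (intOp e * intOp f + intOp f * intOp e)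
        + ((extOp e * intOp f + intOp f * extOp e) + (extOp f * intOp e + intOp e * extOp f)) := by
    simp only [hcOp]; simp only [add_mul, mul_add, sub_mul, mul_sub]; abel
  have h' : (inner ℝ f e : ℝ) = 0 := by rw [real_inner_comm]; exact h
  rw [extS, intS, extintS, extintS, h, h'] at expand
  simp only [zero_smul, add_zero, zero_add, sub_zero, zero_sub, neg_zero] at expand
  exact eq_neg_of_add_eq_zero_left expand

lemma c_mul_hc (e f : E) : cOp e * hcOp f = -(hcOp f * cOp e) := by
  have expand : cOp e * hcOp f + hcOp f * cOp e =
      (extOp e * extOp f + extOp f * extOp e) - (intOp e * intOp f + intOp f * intOp e)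
        + ((extOp e * intOp f + intOp f * extOp e) - (extOp f * intOp e + intOp e * extOp f)) := by
    simp only [cOp, hcOp]; simp only [add_mul, mul_add, sub_mul, mul_sub]; abel
  rw [extS, intS, extintS, extintS, real_inner_comm f e] at expand
  simp only [sub_self, sub_zero, zero_add, add_zero, zero_sub, neg_zero] at expand
  exact eq_neg_of_add_eq_zero_left expand

lemma hc_mul_c (e f : E) : hcOp e * cOp f = -(cOp f * hcOp e) := by
  have expand : hcOp e * cOp f + cOp f * hcOp e =
      (extOp e * extOp f + extOp f * extOp e) - (intOp e * intOp f + intOp f * intOp e)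
        - ((extOp e * intOp f + intOp f * extOp e) - (extOp f * intOp e + intOp e * extOp f)) := by
    simp only [cOp, hcOp]; simp only [add_mul, mul_add, sub_mul, mul_sub]; abel
  rw [extS, intS, extintS, extintS, real_inner_comm f e] at expand
  simp only [sub_self, sub_zero, zero_add, add_zero, zero_sub, neg_zero] at expand
  exact eq_neg_of_add_eq_zero_left expand

/-! ### Grading lemmas -/

local notation "Rng" => LinearMap.range (ExteriorAlgebra.ι ℝ (M := E))

lemma ext_mem_pow (e : E) {p : ℕ} {x : ExteriorAlgebra ℝ E} (hx : x ∈ Rng ^ p) :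
    extOp e x ∈ Rng ^ (p + 1) := by
  rw [pow_succ']
  exact Submodule.mul_mem_mul (LinearMap.mem_range_self _ e) hx

lemma int_mem_pow (e : E) : ∀ p : ℕ, ∀ x ∈ Rng ^ (p + 1), intOp e x ∈ Rng ^ p := by
  intro p
  induction p with
  | zero =>
    intro x hx
    rw [pow_one] at hx
    obtain ⟨m, rfl⟩ := hx
    rw [pow_zero]
    exact Submodule.mem_one.mpr ⟨_, (CliffordAlgebra.contractLeft_ι _ _ m).symm⟩
  | succ q ih =>
    intro x hx
    rw [pow_succ'] at hx
    refine Submodule.mul_induction_on hx ?_ ?_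
    · rintro _ ⟨m, rfl⟩ y hy
      show CliffordAlgebra.contractLeft _ _ ∈ _
      rw [CliffordAlgebra.contractLeft_ι_mul]
      refine sub_mem (Submodule.smul_mem _ _ hy) ?_
      have h1 : intOp e y ∈ Rng ^ q := ih y hy
      have h2 := Submodule.mul_mem_mul
        (LinearMap.mem_range_self (ExteriorAlgebra.ι ℝ (M := E)) m) h1
      rwa [← pow_succ'] at h2
    · intro a b ha hb
      rw [map_add]
      exact add_mem ha hb

lemma int_mem_zero (e : E) {x : ExteriorAlgebra ℝ E} (hx : x ∈ Rng ^ 0) : intOp e x = 0 := by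
  rw [pow_zero] at hx
  obtain ⟨r, rfl⟩ := Submodule.mem_one.mp hx
  exact CliffordAlgebra.contractLeft_algebraMap _ _ r

lemma gamma_anti_ext (Γ : Module.End ℝ (ExteriorAlgebra ℝ E))
    (hΓ : ∀ p : ℕ, ∀ ω ∈ Rng ^ p, Γ ω = ((-1 : ℝ) ^ p) • ω) (e : E) :
    Γ * extOp e = -(extOp e * Γ) := by
  rw [eq_neg_iff_add_eq_zero]
  refine LinearMap.ext fun x => ?_
  have hx : x ∈ (⊤ : Submodule ℝ (ExteriorAlgebra ℝ E)) := trivial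
  rw [← CliffordAlgebra.iSup_ι_range_eq_top (Q := (0 : QuadraticForm ℝ E))] at hx
  refine Submodule.iSup_induction
    (motive := fun z => (Γ * extOp e + extOp e * Γ) z = 0) _ hx ?_ ?_ ?_
  · intro p y hy
    simp only [LinearMap.add_apply, Module.End.mul_apply, LinearMap.zero_apply]
    rw [hΓ p y hy, map_smul, hΓ (p + 1) _ (ext_mem_pow e hy), ← add_smul]
    have h0 : ((-1 : ℝ)) ^ (p + 1) + (-1 : ℝ) ^ p = 0 := by rw [pow_succ]; ring
    rw [h0, zero_smul]
  · simp
  · intro a b ha hb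
    rw [map_add, ha, hb, add_zero]

lemma gamma_anti_int (Γ : Module.End ℝ (ExteriorAlgebra ℝ E))
    (hΓ : ∀ p : ℕ, ∀ ω ∈ Rng ^ p, Γ ω = ((-1 : ℝ) ^ p) • ω) (e : E) :
    Γ * intOp e = -(intOp e * Γ) := by
  rw [eq_neg_iff_add_eq_zero]
  refine LinearMap.ext fun x => ?_
  have hx : x ∈ (⊤ : Submodule ℝ (ExteriorAlgebra ℝ E)) := trivial
  rw [← CliffordAlgebra.iSup_ι_range_eq_top (Q := (0 : QuadraticForm ℝ E))] at hx
  refine Submodule.iSup_induction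
    (motive := fun z => (Γ * intOp e + intOp e * Γ) z = 0) _ hx ?_ ?_ ?_
  · intro p y hy
    simp only [LinearMap.add_apply, Module.End.mul_apply, LinearMap.zero_apply]
    match p with
    | 0 =>
      rw [int_mem_zero e hy, map_zero, hΓ 0 y hy, map_smul, int_mem_zero e hy]
      simp
    | q + 1 =>
      rw [hΓ (q + 1) y hy, map_smul, hΓ q _ (int_mem_pow e q y hy), ← add_smul]
      have h0 : ((-1 : ℝ)) ^ q + (-1 : ℝ) ^ (q + 1) = 0 := by rw [pow_succ]; ring
      rw [h0, zero_smul]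
  · simp
  · intro a b ha hb
    rw [map_add, ha, hb, add_zero]

lemma gamma_anti (Γ x y : Module.End ℝ (ExteriorAlgebra ℝ E))
    (hx : Γ * x = -(x * Γ)) (hy : Γ * y = -(y * Γ)) :
    (Γ * (x + y) = -((x + y) * Γ)) ∧ (Γ * (x - y) = -((x - y) * Γ)) := by
  constructor
  · rw [mul_add, hx, hy, add_mul]; abel
  · rw [mul_sub, hx, hy, sub_mul]; abel

lemma anticomm_list_prod (x : Module.End ℝ (ExteriorAlgebra ℝ E))
    (l : List (Module.End ℝ (ExteriorAlgebra ℝ E))) (h : ∀ y ∈ l, x * y = -(y * x)) :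
    x * l.prod = ((-1 : ℝ) ^ l.length) • (l.prod * x) := by
  induction l with
  | nil => simp
  | cons a t ih =>
    rw [List.prod_cons, ← mul_assoc, h a (List.mem_cons_self), neg_mul (α := Module.End ℝ (ExteriorAlgebra ℝ E)), mul_assoc,
      ih (fun y hy => h y (List.mem_cons_of_mem a hy)), List.length_cons, pow_succ,
      mul_smul_comm, ← neg_smul (M := Module.End ℝ (ExteriorAlgebra ℝ E)), ← mul_assoc]
    congr 1
    ring

/-! ### Trace lemmas -/

lemma trace_zero_odd (A Γ : Module.End ℝ (ExteriorAlgebra ℝ E)) (h : Γ * A = -(A * Γ)) :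
    LinearMap.trace ℝ (ExteriorAlgebra ℝ E) (Γ * A) = 0 := by
  have hc := LinearMap.trace_mul_comm ℝ Γ A
  have h2 : LinearMap.trace ℝ (ExteriorAlgebra ℝ E) (Γ * A)
      = -LinearMap.trace ℝ (ExteriorAlgebra ℝ E) (A * Γ) := by rw [h, map_neg]
  linarith

lemma trace_zero_even (x A Γ : Module.End ℝ (ExteriorAlgebra ℝ E)) (ε : ℝ) (hε : ε ≠ 0)
    (hx2 : x * x = ε • 1) (hxA : x * A = A * x) (hxΓ : Γ * x = -(x * Γ)) :
    LinearMap.trace ℝ (ExteriorAlgebra ℝ E) (Γ * A) = 0 := by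
  have key : Γ * x * A * x = ε • (Γ * A) := by
    rw [mul_assoc (Γ * x) A x, ← hxA, ← mul_assoc, mul_assoc Γ x x, hx2]
    rw [mul_smul_comm, smul_mul_assoc, mul_one]
  have key2 : x * (Γ * x * A) = -(ε • (Γ * A)) := by
    have hxΓ' : x * Γ = -(Γ * x) := by rw [hxΓ, neg_neg]
    rw [← mul_assoc, ← mul_assoc, hxΓ', neg_mul (α := Module.End ℝ (ExteriorAlgebra ℝ E)), neg_mul (α := Module.End ℝ (ExteriorAlgebra ℝ E)), mul_assoc Γ x x, hx2,
      mul_smul_comm, smul_mul_assoc, mul_one]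
  have hc := LinearMap.trace_mul_comm ℝ (Γ * x * A) x
  rw [key2] at hc
  have h3 : LinearMap.trace ℝ (ExteriorAlgebra ℝ E) (Γ * x * A * x)
      = ε * LinearMap.trace ℝ (ExteriorAlgebra ℝ E) (Γ * A) := by
    rw [key, map_smul, smul_eq_mul]
  rw [h3, map_neg, map_smul, smul_eq_mul] at hc
  have h0 : ε * LinearMap.trace ℝ (ExteriorAlgebra ℝ E) (Γ * A) = 0 := by linarith
  rcases mul_eq_zero.mp h0 with h | h
  · exact absurd h hε
  · exact h

/-! ### Main theorem -/

theorem supertrace_partial_monomial {n : ℕ} (hn : 1 ≤ n) (b : OrthonormalBasis (Fin n) ℝ E)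
    (Γ : Module.End ℝ (ExteriorAlgebra ℝ E))
    (hΓ : ∀ p : ℕ, ∀ ω ∈ (LinearMap.range (ExteriorAlgebra.ι ℝ (M := E))) ^ p,
      Γ ω = ((-1 : ℝ) ^ p) • ω)
    (S T : Finset (Fin n)) (hST : ¬(S = Finset.univ ∧ T = Finset.univ)) :
    LinearMap.trace ℝ (ExteriorAlgebra ℝ E)
      (Γ ∘ₗ (((S.sort (· ≤ ·)).map fun i => cOp (b i)).prod *
              ((T.sort (· ≤ ·)).map fun j => hcOp (b j)).prod)) = 0 := by
  classical
  have hbij : ∀ i j : Fin n, (inner ℝ (b i) (b j) : ℝ) = if i = j then 1 else 0 :=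
    orthonormal_iff_ite.mp b.orthonormal
  have hΓc : ∀ e : E, Γ * cOp e = -(cOp e * Γ) := fun e =>
    (gamma_anti Γ _ _ (gamma_anti_ext Γ hΓ e) (gamma_anti_int Γ hΓ e)).2
  have hΓhc : ∀ e : E, Γ * hcOp e = -(hcOp e * Γ) := fun e =>
    (gamma_anti Γ _ _ (gamma_anti_ext Γ hΓ e) (gamma_anti_int Γ hΓ e)).1
  rw [← Module.End.mul_eq_comp, ← List.prod_append]
  set L := (((S.sort (· ≤ ·)).map fun i => cOp (b i)) ++
      ((T.sort (· ≤ ·)).map fun j => hcOp (b j))) with hLdef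
  have hmemL : ∀ y ∈ L, (∃ i ∈ S, y = cOp (b i)) ∨ (∃ j ∈ T, y = hcOp (b j)) := by
    intro y hy
    rcases List.mem_append.mp hy with hy | hy
    · obtain ⟨i, hi, rfl⟩ := List.mem_map.mp hy
      exact Or.inl ⟨i, (Finset.mem_sort _).mp hi, rfl⟩
    · obtain ⟨j, hj, rfl⟩ := List.mem_map.mp hy
      exact Or.inr ⟨j, (Finset.mem_sort _).mp hj, rfl⟩
  have hΓy : ∀ y ∈ L, Γ * y = -(y * Γ) := by
    intro y hy
    rcases hmemL y hy with ⟨i, _, rfl⟩ | ⟨j, _, rfl⟩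
    · exact hΓc (b i)
    · exact hΓhc (b j)
  rcases Nat.even_or_odd L.length with he | ho
  · -- even case
    by_cases hS : S = Finset.univ
    · have hT : T ≠ Finset.univ := fun h => hST ⟨hS, h⟩
      obtain ⟨k, hk⟩ : ∃ k, k ∉ T := by
        by_contra hcon
        push_neg at hcon
        exact hT (Finset.eq_univ_iff_forall.mpr hcon)
      refine trace_zero_even (hcOp (b k)) _ Γ 1 one_ne_zero ?_ ?_ (hΓhc (b k))
      · rw [hc_sq (b k) (by simpa using hbij k k), one_smul]
      · have hanti : ∀ y ∈ L, hcOp (b k) * y = -(y * hcOp (b k)) := by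
          intro y hy
          rcases hmemL y hy with ⟨i, _, rfl⟩ | ⟨j, hj, rfl⟩
          · exact hc_mul_c (b k) (b i)
          · refine hc_mul_hc (b k) (b j) ?_
            have hkj : k ≠ j := fun h => hk (h ▸ hj)
            simpa [hkj] using hbij k j
        rw [anticomm_list_prod (hcOp (b k)) L hanti, he.neg_one_pow, one_smul]
    · obtain ⟨k, hk⟩ : ∃ k, k ∉ S := by
        by_contra hcon
        push_neg at hcon
        exact hS (Finset.eq_univ_iff_forall.mpr hcon)
      refine trace_zero_even (cOp (b k)) _ Γ (-1) (by norm_num) ?_ ?_ (hΓc (b k))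
      · rw [c_sq (b k) (by simpa using hbij k k), neg_smul (M := Module.End ℝ (ExteriorAlgebra ℝ E)), one_smul]
      · have hanti : ∀ y ∈ L, cOp (b k) * y = -(y * cOp (b k)) := by
          intro y hy
          rcases hmemL y hy with ⟨i, hi, rfl⟩ | ⟨j, _, rfl⟩
          · refine c_mul_c (b k) (b i) ?_
            have hki : k ≠ i := fun h => hk (h ▸ hi)
            simpa [hki] using hbij k i
          · exact c_mul_hc (b k) (b j)
        rw [anticomm_list_prod (cOp (b k)) L hanti, he.neg_one_pow, one_smul]
  · -- odd case
    refine trace_zero_odd _ _ ?_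
    rw [anticomm_list_prod Γ L hΓy, ho.neg_one_pow, neg_one_smul ℝ (M := Module.End ℝ (ExteriorAlgebra ℝ E))]
end
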